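/- Let S be a finite set, Q a rate matrix with marginals q_t, i.e. satisfying the pointwise identity ∂_t q(x) = ∑_y Q(x,y) q(y) at a fixed time, with q strictly positive. Define the one-way matrix Q̄(y,x) = max(Q(y,x) - Q(x,y)·q(y)/q(x), 0) for y ≠ x and Q̄(x,x) = -∑_{y≠x} Q̄(y,x). Then Q̄ satisfies the same forward equation: ∑_y Q̄(x,y) q(y) = ∑_y Q(x,y) q(y) for all x. -/
import Mathlib


open Finset

theorem stmt_4 {S : Type*} [Fintype S] [DecidableEq S] (Q : S → S → ℝ)
    (hpos : ∀ y x : S, y ≠ x → 0 ≤ Q y x)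
    (hdiag : ∀ x : S, Q x x = -∑ y ∈ univ.filter (fun y => y ≠ x), Q y x)
    (q : S → ℝ) (hq : ∀ x, 0 < q x)
    (Qbar : S → S → ℝ)
    (hbar_off : ∀ y x : S, y ≠ x → Qbar y x = max (Q y x - Q x y * q y / q x) 0)
    (hbar_diag : ∀ x : S, Qbar x x = -∑ y ∈ univ.filter (fun y => y ≠ x), Qbar y x) :
    ∀ x : S, ∑ y : S, Qbar x y * q y = ∑ y : S, Q x y * q y := by
  intro x
  have split : ∀ f : S → ℝ, ∑ y : S, f y = f x + ∑ y ∈ univ.filter (fun y => y ≠ x), f y := by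
    intro f
    rw [Finset.filter_ne', Finset.add_sum_erase _ f (mem_univ x)]
  have key : ∀ y, y ≠ x → Qbar x y * q y - Qbar y x * q x = Q x y * q y - Q y x * q x := by
    intro y hyx
    have hqy := (hq y).ne'
    have hqx := (hq x).ne'
    rw [hbar_off x y (Ne.symm hyx), hbar_off y x hyx,
      max_mul_of_nonneg _ _ (hq y).le, max_mul_of_nonneg _ _ (hq x).le,
      sub_mul, sub_mul, div_mul_cancel₀ _ hqy, div_mul_cancel₀ _ hqx, zero_mul, zero_mul]
    rcases le_total (Q x y * q y) (Q y x * q x) with h | h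
    · rw [max_eq_right (by linarith), max_eq_left (by linarith)]; ring
    · rw [max_eq_left (by linarith), max_eq_right (by linarith)]; ring
  rw [split (fun y => Qbar x y * q y), split (fun y => Q x y * q y)]
  simp only [hbar_diag x, hdiag x, neg_mul, ← Finset.sum_mul]
  rw [neg_add_eq_sub, neg_add_eq_sub, Finset.sum_mul, Finset.sum_mul,
    ← Finset.sum_sub_distrib, ← Finset.sum_sub_distrib]
  exact Finset.sum_congr rfl fun y hy => key y (by simpa using hy)
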